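/- arXiv:1511.01694 — 3 statements merged into one kernel-verified Lean document; each statement's English description precedes it below -/
import Mathlib

section
/- Let (Pₙ) be a sequence of polynomials over ℂ with P₀ = 1, deg Pₙ = n, and suppose P₁(x)·Pₙ(x) = aₙ Pₙ₋₁(x) + bₙ Pₙ(x) + cₙ Pₙ₊₁(x) for all n ≥ 1, with real coefficients aₙ, bₙ, cₙ ≥ 0 summing to 1 and aₙ, cₙ > 0, and P₁(x) = x (normalized). Fix λ ∈ ℂ and suppose f : ℕ → ℂ satisfies f(0) = 0 and the recursion aₙ f(n−1) + bₙ f(n) + cₙ f(n+1) = λ f(n) + f(1) Pₙ(λ) for all n ≥ 1, and f(1) = f(1). Then f(n) = f(1) · Pₙ′(λ) for all n ∈ ℕ. -/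
/-!
Differentiating the linearization `X * Pₙ = aₙ Pₙ₋₁ + bₙ Pₙ + cₙ Pₙ₊₁` at `λ` shows that
`n ↦ f 1 * Pₙ'(λ)` satisfies the same recursion as `f`, with the same values at `0` and `1`.
Their difference solves a homogeneous three-term recursion with `cₙ ≠ 0`, so it vanishes.
-/

open Polynomial

theorem eq_zero_of_three_term_recurrence {R : Type*} [CommRing R] [IsDomain R]
    {a b c φ : ℕ → R} (hc : ∀ n, c n ≠ 0)
    (hrec : ∀ n, a n * φ n + b n * φ (n + 1) + c n * φ (n + 2) = 0)
    (h0 : φ 0 = 0) (h1 : φ 1 = 0) : ∀ n, φ n = 0 := by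
  intro n
  induction n using Nat.twoStepInduction with
  | zero => exact h0
  | one => exact h1
  | more n ih₀ ih₁ =>
    refine (mul_eq_zero.mp ?_).resolve_left (hc n)
    linear_combination hrec n - a n * ih₀ - b n * ih₁

theorem Polynomial.eval_derivative_of_X_mul_eq {R : Type*} [CommRing R] {p q r : R[X]}
    {α β γ : R} (h : X * p = C α * q + C β * p + C γ * r) (x : R) :
    α * q.derivative.eval x + β * p.derivative.eval x + γ * r.derivative.eval x =
      x * p.derivative.eval x + p.eval x := by
  have h' := congrArg (fun s => s.derivative.eval x) h
  simp only [derivative_mul, derivative_X, derivative_C, derivative_add, eval_add, eval_mul,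
    eval_X, eval_C, zero_mul, one_mul, zero_add] at h'
  linear_combination -h'

theorem sine_on_polynomial_hypergroup_general
    (P : ℕ → Polynomial ℂ) (a b c : ℕ → ℝ)
    (hP0 : P 0 = 1) (hP1 : P 1 = Polynomial.X)
    (hcpos : ∀ n : ℕ, 1 ≤ n → 0 < c n)
    (hlin : ∀ n : ℕ, 1 ≤ n →
      P 1 * P n = Polynomial.C (a n : ℂ) * P (n - 1) + Polynomial.C (b n : ℂ) * P n +
        Polynomial.C (c n : ℂ) * P (n + 1))
    (l : ℂ) (f : ℕ → ℂ) (hf0 : f 0 = 0)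
    (hrec : ∀ n : ℕ, 1 ≤ n →
      (a n : ℂ) * f (n - 1) + (b n : ℂ) * f n + (c n : ℂ) * f (n + 1) =
        l * f n + f 1 * (P n).eval l) :
    ∀ n : ℕ, f n = f 1 * ((P n).derivative.eval l) := by
  set φ : ℕ → ℂ := fun n ↦ f n - f 1 * (P n).derivative.eval l with hφ
  have hφrec (n : ℕ) : (a (n + 1) : ℂ) * φ n + ((b (n + 1) : ℂ) - l) * φ (n + 1) +
      (c (n + 1) : ℂ) * φ (n + 2) = 0 := by
    have hf := hrec (n + 1) n.succ_pos
    have hP := eval_derivative_of_X_mul_eq (hP1 ▸ hlin (n + 1) n.succ_pos) l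
    simp only [Nat.add_sub_cancel] at hf hP
    linear_combination hf - f 1 * hP
  have hc (n : ℕ) : (c (n + 1) : ℂ) ≠ 0 := by exact_mod_cast (hcpos (n + 1) n.succ_pos).ne'
  intro n
  refine sub_eq_zero.mp (eq_zero_of_three_term_recurrence hc hφrec ?_ ?_ n)
  · simp [hφ, hf0, hP0]
  · simp [hφ, hP1]

theorem sine_on_polynomial_hypergroup
    (P : ℕ → Polynomial ℂ) (a b c : ℕ → ℝ)
    (hP0 : P 0 = 1) (hP1 : P 1 = Polynomial.X)
    (hdeg : ∀ n : ℕ, (P n).natDegree = n)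
    (ha : ∀ n : ℕ, 0 ≤ a n) (hb : ∀ n : ℕ, 0 ≤ b n) (hc : ∀ n : ℕ, 0 ≤ c n)
    (hapos : ∀ n : ℕ, 1 ≤ n → 0 < a n) (hcpos : ∀ n : ℕ, 1 ≤ n → 0 < c n)
    (hsum : ∀ n : ℕ, 1 ≤ n → a n + b n + c n = 1)
    (hlin : ∀ n : ℕ, 1 ≤ n →
      P 1 * P n = Polynomial.C (a n : ℂ) * P (n - 1) + Polynomial.C (b n : ℂ) * P n +
        Polynomial.C (c n : ℂ) * P (n + 1))
    (l : ℂ) (f : ℕ → ℂ) (hf0 : f 0 = 0)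
    (hrec : ∀ n : ℕ, 1 ≤ n →
      (a n : ℂ) * f (n - 1) + (b n : ℂ) * f n + (c n : ℂ) * f (n + 1) =
        l * f n + f 1 * (P n).eval l) :
    ∀ n : ℕ, f n = f 1 * ((P n).derivative.eval l) :=
  sine_on_polynomial_hypergroup_general P a b c hP0 hP1 hcpos hlin l f hf0 hrec
end

section
/- Let f : (ℝ \ {0}) × ℝ → ℂ be continuous and satisfy the compatibility conditions f(x,u) = f(−x,u) = f(x,−u) = f(−x,−u), and suppose for some λ ∈ ℂ it satisfies f(xy, xv+u) + f(xy, xv−u) = 2f(x,u)|y|^λ + 2f(y,v)|x|^λ for all nonzero reals x, y and all reals u, v (where |x|^λ = exp(λ log|x|)). Then there exists c ∈ ℂ such that f(x,u) = c·|x|^λ·ln|x| for all x ≠ 0 and all u. -/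
/-!
Putting `x = 1` in the equation gives `f(y,u) = f(y,0) + f(1,u)|y|^λ`. Feeding this back with
`y = 1` shows that `f(1,·)` is invariant under all nonzero dilations, hence constant by
continuity, and equal to `f(1,0) = 0`. So `f` does not depend on `u`, and `x ↦ f(x,0)/|x|^λ` is a
continuous homomorphism from the multiplicative group `ℝˣ` to `(ℂ, +)`, i.e. a multiple of
`log |x|`.
-/

/-- `|x|^λ = exp(λ log |x|)` for `x ≠ 0`. -/
noncomputable def absPow (l : ℂ) (x : ℝ) : ℂ := Complex.exp (l * Real.log |x|)

lemma absPow_one (l : ℂ) : absPow l 1 = 1 := by simp [absPow]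

lemma absPow_ne_zero (l : ℂ) (x : ℝ) : absPow l x ≠ 0 := Complex.exp_ne_zero _

lemma absPow_mul (l : ℂ) {x y : ℝ} (hx : x ≠ 0) (hy : y ≠ 0) :
    absPow l (x * y) = absPow l x * absPow l y := by
  rw [absPow, absPow, absPow, abs_mul, Real.log_mul (abs_ne_zero.2 hx) (abs_ne_zero.2 hy),
    ← Complex.exp_add]
  push_cast
  ring_nf

lemma continuousOn_absPow (l : ℂ) : ContinuousOn (absPow l) {0}ᶜ := by
  unfold absPow
  fun_prop (disch := simp_all)

lemma eq_apply_zero_of_apply_mul_eq {X : Type*} [TopologicalSpace X] [T2Space X] {g : ℝ → X}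
    (hg : Continuous g) (hdil : ∀ x ≠ 0, ∀ v, g (x * v) = g v) (u : ℝ) : g u = g 0 := by
  have hconst : g = fun _ => g 1 :=
    hg.ext_on (dense_compl_singleton 0) continuous_const
      fun x hx => by simpa using hdil x hx 1
  rw [hconst]

lemma exists_eq_log_smul_of_map_mul {E : Type*} [NormedAddCommGroup E] [NormedSpace ℝ E]
    {H : ℝ → E} (hcont : ContinuousOn H {0}ᶜ)
    (hmul : ∀ x y, x ≠ 0 → y ≠ 0 → H (x * y) = H x + H y) :
    ∃ c : E, ∀ x ≠ 0, H x = Real.log |x| • c := by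
  -- evenness is automatic: `2 • H x = H (x * x) = H (|x| * |x|) = 2 • H |x|`
  have habs : ∀ x ≠ 0, H x = H |x| := by
    intro x hx
    have h := hmul x x hx hx
    rw [← abs_mul_abs_self, hmul |x| |x| (abs_ne_zero.2 hx) (abs_ne_zero.2 hx)] at h
    simpa [← two_smul ℝ] using h.symm
  let G : ℝ →+ E := AddMonoidHom.mk' (H ∘ Real.exp) fun s t => by
    simp only [Function.comp, Real.exp_add]
    exact hmul _ _ (Real.exp_pos s).ne' (Real.exp_pos t).ne'
  have hG : Continuous G :=
    hcont.comp_continuous Real.continuous_exp fun t => (Real.exp_pos t).ne'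
  refine ⟨G 1, fun x hx => ?_⟩
  calc H x = G (Real.log |x| • 1) := by
        rw [smul_eq_mul, mul_one, habs x hx]
        exact congrArg H (Real.exp_log (abs_pos.2 hx)).symm
    _ = Real.log |x| • G 1 := map_real_smul G hG _ 1

lemma exists_eq_mul_absPow_mul_log (l : ℂ) {F : ℝ → ℂ} (hcont : ContinuousOn F {0}ᶜ)
    (hmul : ∀ x y, x ≠ 0 → y ≠ 0 → F (x * y) = F x * absPow l y + F y * absPow l x) :
    ∃ c : ℂ, ∀ x ≠ 0, F x = c * absPow l x * Real.log |x| := by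
  obtain ⟨c, hc⟩ := exists_eq_log_smul_of_map_mul (H := fun x => F x / absPow l x)
    (hcont.div (continuousOn_absPow l) fun x _ => absPow_ne_zero l x) fun x y hx hy => by
      have := absPow_ne_zero l x
      have := absPow_ne_zero l y
      rw [hmul x y hx hy, absPow_mul l hx hy]
      field_simp
  refine ⟨c, fun x hx => ?_⟩
  rw [← div_mul_cancel₀ (F x) (absPow_ne_zero l x), hc x hx, Complex.real_smul]
  ring

/-- The `mλ`-sine equation on `G//K`; `f x u` is the value at the double coset of `(x, u)`. -/
def IsSine (l : ℂ) (f : ℝ → ℝ → ℂ) : Prop :=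
  ∀ x y : ℝ, x ≠ 0 → y ≠ 0 → ∀ u v : ℝ,
    f (x * y) (x * v + u) + f (x * y) (x * v - u) = 2 * f x u * absPow l y + 2 * f y v * absPow l x

namespace IsSine

variable {l : ℂ} {f : ℝ → ℝ → ℂ}

lemma apply_one_zero (h : IsSine l f) : f 1 0 = 0 := by
  have h' := h 1 1 one_ne_zero one_ne_zero 0 0
  simp only [mul_zero, zero_add, sub_zero, absPow_one, mul_one] at h'
  linear_combination -h' / 2

lemma apply_mul_zero (h : IsSine l f) {x y : ℝ} (hx : x ≠ 0) (hy : y ≠ 0) :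
    f (x * y) 0 = f x 0 * absPow l y + f y 0 * absPow l x := by
  have h' := h x y hx hy 0 0
  simp only [mul_zero, add_zero, sub_zero] at h'
  linear_combination h' / 2

lemma apply_eq_apply_zero_add (h : IsSine l f) (hev : ∀ y ≠ 0, ∀ u, f y (-u) = f y u)
    {y : ℝ} (hy : y ≠ 0) (u : ℝ) : f y u = f y 0 + f 1 u * absPow l y := by
  have h' := h 1 y one_ne_zero hy u 0
  simp only [one_mul, mul_zero, zero_add, zero_sub, absPow_one, mul_one] at h'
  rw [hev y hy] at h'
  linear_combination h' / 2

lemma apply_one_mul (h : IsSine l f) (hev : ∀ y ≠ 0, ∀ u, f y (-u) = f y u)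
    {x : ℝ} (hx : x ≠ 0) (v : ℝ) : f 1 (x * v) = f 1 v := by
  have h' := h x 1 hx one_ne_zero 0 v
  simp only [mul_one, add_zero, sub_zero, absPow_one] at h'
  rw [h.apply_eq_apply_zero_add hev hx (x * v)] at h'
  exact mul_right_cancel₀ (absPow_ne_zero l x) (by linear_combination h' / 2)

lemma apply_eq_apply_zero (h : IsSine l f) (hev : ∀ y ≠ 0, ∀ u, f y (-u) = f y u)
    (hcont : Continuous (f 1)) {y : ℝ} (hy : y ≠ 0) (u : ℝ) : f y u = f y 0 := by
  rw [h.apply_eq_apply_zero_add hev hy,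
    eq_apply_zero_of_apply_mul_eq hcont (fun _ hx => h.apply_one_mul hev hx), h.apply_one_zero,
    zero_mul, add_zero]

end IsSine

theorem sine_on_double_coset_hypergroup (l : ℂ) (f : ℝ → ℝ → ℂ)
    (hcont : ContinuousOn (fun p : ℝ × ℝ => f p.1 p.2) {p : ℝ × ℝ | p.1 ≠ 0})
    (hcompat : ∀ x : ℝ, x ≠ 0 → ∀ u : ℝ,
      f x u = f (-x) u ∧ f x u = f x (-u) ∧ f x u = f (-x) (-u))
    (heq : ∀ x y : ℝ, x ≠ 0 → y ≠ 0 → ∀ u v : ℝ,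
      f (x * y) (x * v + u) + f (x * y) (x * v - u) =
        2 * f x u * absPow l y + 2 * f y v * absPow l x) :
    ∃ c : ℂ, ∀ x : ℝ, x ≠ 0 → ∀ u : ℝ, f x u = c * absPow l x * Real.log |x| := by
  have hsine : IsSine l f := heq
  have hev : ∀ y ≠ 0, ∀ u, f y (-u) = f y u := fun y hy u => (hcompat y hy u).2.1.symm
  have hcont_one : Continuous (f 1) :=
    hcont.comp_continuous (continuous_const.prodMk continuous_id) fun _ => one_ne_zero
  have hcont_zero : ContinuousOn (f · 0) {0}ᶜ :=
    hcont.comp (continuousOn_id.prodMk continuousOn_const) fun _ hx => hx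
  obtain ⟨c, hc⟩ := exists_eq_mul_absPow_mul_log l hcont_zero fun x y hx hy =>
    hsine.apply_mul_zero hx hy
  exact ⟨c, fun x hx u => by rw [hsine.apply_eq_apply_zero hev hcont_one hx u, hc x hx]⟩
end

section
/- Let m : (ℝ \ {0}) × ℝ → ℂ be continuous, not identically zero, satisfy m(x,u) = m(−x,u) = m(x,−u) = m(−x,−u), and satisfy m(xy, xv+u) + m(xy, xv−u) = 2m(x,u)m(y,v) for all nonzero reals x, y and reals u, v. Then there exists λ ∈ ℂ such that m(x,u) = |x|^λ for all x ≠ 0 and all u ∈ ℝ. -/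
/-!
Putting `u = 0` or `v = 0` in the product formula splits `m` as `m x u = m 1 u * m x 0`, with
`x ↦ m x 0` multiplicative. Taking `y = x⁻¹`, `u = 0`, `v = 1` then shows that `u ↦ m 1 u` is
constant off `0`, hence identically `m 1 0 = 1` by continuity. A continuous multiplicative function
on `(0, ∞)` is a complex power `exp (l * log x)`, and evenness in `x` extends this to `x < 0`.
-/

open Complex intervalIntegral

section CauchyExponential

variable {h : ℝ → ℂ}

lemma integral_zero_add_of_map_add (hc : Continuous h)
    (hadd : ∀ s t, h (s + t) = h s * h t) (t a : ℝ) :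
    ∫ s in (0 : ℝ)..t + a, h s = (∫ s in (0 : ℝ)..t, h s) + h t * ∫ s in (0 : ℝ)..a, h s := by
  rw [← integral_add_adjacent_intervals (hc.intervalIntegrable 0 t) (hc.intervalIntegrable t _),
    ← integral_const_mul]
  congr 1
  simpa only [add_zero, hadd] using (integral_comp_add_left h t (a := 0) (b := a)).symm

/-- The trick is that `h t = (H (t + a) - H t) / H a` for the primitive `H` of `h` and any `a` with
`H a ≠ 0`, so `h` inherits the differentiability of `H`. -/
lemma Continuous.exists_hasDerivAt_eq_mul_of_map_add (hc : Continuous h) (h0 : h 0 = 1)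
    (hadd : ∀ s t, h (s + t) = h s * h t) : ∃ L : ℂ, ∀ t, HasDerivAt h (L * h t) t := by
  set H : ℝ → ℂ := fun t => ∫ s in (0 : ℝ)..t, h s
  have hH : ∀ t, HasDerivAt H (h t) t := fun t =>
    (hc.integral_hasStrictDerivAt 0 t).hasDerivAt
  obtain ⟨a, ha⟩ : ∃ a, H a ≠ 0 := by
    by_contra! hzero
    have : deriv H 0 = 0 := by rw [show H = fun _ => 0 from funext hzero, deriv_const]
    exact one_ne_zero (h0 ▸ (hH 0).deriv ▸ this)
  have hrepr : h = fun t => (H (t + a) - H t) / H a := by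
    funext t
    rw [eq_div_iff ha]
    simp only [H, integral_zero_add_of_map_add hc hadd]
    ring
  refine ⟨(h a - 1) / H a, fun t => ?_⟩
  have hderiv : HasDerivAt (fun t => (H (t + a) - H t) / H a) ((h (t + a) - h t) / H a) t :=
    (((hH (t + a)).comp_add_const t a).sub (hH t)).div_const (H a)
  rw [← hrepr, hadd] at hderiv
  convert hderiv using 1
  ring

lemma eq_mul_cexp_of_hasDerivAt_eq_mul {L : ℂ} (hderiv : ∀ t, HasDerivAt h (L * h t) t) (t : ℝ) :
    h t = h 0 * exp (L * t) := by
  have hconst : ∀ s, HasDerivAt (fun s : ℝ => exp (-L * s) * h s) 0 s := fun s => by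
    have hexp : HasDerivAt (fun s : ℝ => exp (-L * s)) (exp (-L * s) * -L) s := by
      simpa using (((hasDerivAt_id (s : ℂ)).const_mul (-L)).cexp).comp_ofReal
    have hprod : HasDerivAt (fun s : ℝ => exp (-L * s) * h s)
        (exp (-L * s) * -L * h s + exp (-L * s) * (L * h s)) s := hexp.mul (hderiv s)
    convert hprod using 1
    ring
  have := is_const_of_deriv_eq_zero (fun s => (hconst s).differentiableAt)
    (fun s => (hconst s).deriv) t 0
  simp only [ofReal_zero, mul_zero, exp_zero, one_mul, neg_mul, exp_neg] at this
  rw [← this]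
  field_simp

theorem Continuous.exists_eq_cexp_mul_of_map_add (hc : Continuous h) (h0 : h 0 = 1)
    (hadd : ∀ s t, h (s + t) = h s * h t) : ∃ L : ℂ, ∀ t, h t = exp (L * t) := by
  obtain ⟨L, hL⟩ := hc.exists_hasDerivAt_eq_mul_of_map_add h0 hadd
  exact ⟨L, fun t => by rw [eq_mul_cexp_of_hasDerivAt_eq_mul hL, h0, one_mul]⟩

end CauchyExponential

theorem exists_eq_cexp_mul_log_of_map_mul {f : ℝ → ℂ} (hc : ContinuousOn f (Set.Ioi 0))
    (h1 : f 1 = 1) (hmul : ∀ x y, 0 < x → 0 < y → f (x * y) = f x * f y) :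
    ∃ L : ℂ, ∀ x, 0 < x → f x = exp (L * Real.log x) := by
  obtain ⟨L, hL⟩ := Continuous.exists_eq_cexp_mul_of_map_add (h := fun t => f (Real.exp t))
    (hc.comp_continuous Real.continuous_exp Real.exp_pos) (by simpa using h1)
    (fun s t => by simpa only [Real.exp_add] using hmul _ _ (Real.exp_pos s) (Real.exp_pos t))
  exact ⟨L, fun x hx => by simpa only [Real.exp_log hx] using hL (Real.log x)⟩

def SatisfiesProductFormula (m : ℝ → ℝ → ℂ) : Prop :=
  ∀ x y : ℝ, x ≠ 0 → y ≠ 0 → ∀ u v : ℝ,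
    m (x * y) (x * v + u) + m (x * y) (x * v - u) = 2 * m x u * m y v

namespace SatisfiesProductFormula

variable {m : ℝ → ℝ → ℂ}

lemma apply_mul_zero (hm : SatisfiesProductFormula m) {x y : ℝ} (hx : x ≠ 0) (hy : y ≠ 0) :
    m (x * y) 0 = m x 0 * m y 0 := by
  have := hm x y hx hy 0 0
  simp only [mul_zero, add_zero, sub_zero] at this
  linear_combination this / 2

lemma apply_eq_apply_one_mul (hm : SatisfiesProductFormula m) {y u : ℝ} (hy : y ≠ 0)
    (hneg : m y (-u) = m y u) : m y u = m 1 u * m y 0 := by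
  have := hm 1 y one_ne_zero hy u 0
  simp only [one_mul, mul_zero, zero_add, zero_sub, hneg] at this
  linear_combination this / 2

lemma apply_one_zero (hm : SatisfiesProductFormula m)
    (heven : ∀ x, x ≠ 0 → ∀ u, m x (-u) = m x u) (hne : ∃ x u, x ≠ 0 ∧ m x u ≠ 0) :
    m 1 0 = 1 := by
  obtain ⟨x, u, hx, hxu⟩ := hne
  have hx0 : m x 0 ≠ 0 := fun h => hxu (by rw [hm.apply_eq_apply_one_mul hx (heven x hx u), h,
    mul_zero])
  have := hm.apply_mul_zero hx one_ne_zero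
  rw [mul_one] at this
  exact (mul_eq_left₀ hx0).mp this.symm

lemma apply_one_eq_apply_one_one (hm : SatisfiesProductFormula m)
    (heven : ∀ x, x ≠ 0 → ∀ u, m x (-u) = m x u) (h10 : m 1 0 = 1) {x : ℝ} (hx : x ≠ 0) :
    m 1 x = m 1 1 := by
  have hinv : m x 0 * m x⁻¹ 0 = 1 := by
    rw [← hm.apply_mul_zero hx (inv_ne_zero hx), mul_inv_cancel₀ hx, h10]
  have := hm x x⁻¹ hx (inv_ne_zero hx) 0 1
  rw [mul_inv_cancel₀ hx, mul_one, add_zero, sub_zero,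
    hm.apply_eq_apply_one_mul (inv_ne_zero hx) (heven _ (inv_ne_zero hx) 1)] at this
  linear_combination this / 2 + m 1 1 * hinv

lemma apply_one_eq_one (hm : SatisfiesProductFormula m)
    (heven : ∀ x, x ≠ 0 → ∀ u, m x (-u) = m x u) (h10 : m 1 0 = 1)
    (hc : ContinuousAt (m 1) 0) (u : ℝ) : m 1 u = 1 := by
  suffices m 1 1 = 1 by
    rcases eq_or_ne u 0 with rfl | hu
    · exact h10
    · rw [hm.apply_one_eq_apply_one_one heven h10 hu, this]
  have hlim : Filter.Tendsto (m 1) (nhdsWithin 0 {0}ᶜ) (nhds (m 1 1)) :=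
    tendsto_const_nhds.congr' (eventually_nhdsWithin_of_forall fun _ hx =>
      (hm.apply_one_eq_apply_one_one heven h10 hx).symm)
  rw [← h10]
  exact tendsto_nhds_unique hlim (hc.tendsto.mono_left nhdsWithin_le_nhds)

end SatisfiesProductFormula

theorem exponential_on_double_coset_hypergroup (m : ℝ → ℝ → ℂ)
    (hcont : ContinuousOn (fun p : ℝ × ℝ => m p.1 p.2) {p : ℝ × ℝ | p.1 ≠ 0})
    (hne : ∃ x u, x ≠ 0 ∧ m x u ≠ 0)
    (hcompat : ∀ x : ℝ, x ≠ 0 → ∀ u : ℝ,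
      m x u = m (-x) u ∧ m x u = m x (-u) ∧ m x u = m (-x) (-u))
    (heq : ∀ x y : ℝ, x ≠ 0 → y ≠ 0 → ∀ u v : ℝ,
      m (x * y) (x * v + u) + m (x * y) (x * v - u) = 2 * m x u * m y v) :
    ∃ l : ℂ, ∀ x : ℝ, x ≠ 0 → ∀ u : ℝ, m x u = Complex.exp (l * Real.log |x|) := by
  have hm : SatisfiesProductFormula m := heq
  have heven : ∀ x, x ≠ 0 → ∀ u, m x (-u) = m x u := fun x hx u => (hcompat x hx u).2.1.symm
  have h10 := hm.apply_one_zero heven hne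
  have hopen : IsOpen {p : ℝ × ℝ | p.1 ≠ 0} := isOpen_ne_fun continuous_fst continuous_const
  have hc1 : ContinuousAt (m 1) 0 :=
    (hcont.continuousAt (hopen.mem_nhds one_ne_zero)).comp (Continuous.prodMk_right 1).continuousAt
  have hc0 : ContinuousOn (fun x => m x 0) (Set.Ioi 0) :=
    hcont.comp (Continuous.prodMk_left 0).continuousOn fun _ hx => ne_of_gt hx
  obtain ⟨l, hl⟩ := exists_eq_cexp_mul_log_of_map_mul hc0 h10
    fun x y hx hy => hm.apply_mul_zero hx.ne' hy.ne'
  refine ⟨l, fun x hx u => ?_⟩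
  calc m x u = m 1 u * m x 0 := hm.apply_eq_apply_one_mul hx (heven x hx u)
    _ = m |x| 0 := by
      rw [hm.apply_one_eq_one heven h10 hc1, one_mul]
      rcases abs_choice x with habs | habs <;> rw [habs]
      exact (hcompat x hx 0).1
    _ = exp (l * Real.log |x|) := hl |x| (abs_pos.mpr hx)
end
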